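/- Algorithm defined by μ^{[t+1]} minimizing Σ_k λ_k^{[t+1]} u_k(μ) with λ_k^{[t+1]} = (∏_ℓ u_ℓ(μ^{[t]}))^{1/K}/u_k(μ^{[t]}) produces a non-increasing sequence of products ∏_k u_k(μ^{[t]}); since this product is bounded below by 0, the sequence of products converges. -/

import Mathlib

/-! The minimisation step, divided by the common factor `(∏ ℓ u ℓ)^(1/K)`, says that the ratios
`r k = u k (μ (t+1)) / u k (μ t)` have sum at most `K`. Since `r ≤ exp (r - 1)`, their product is at
most `exp (∑ r - K) ≤ 1`, i.e. the product of the `u k` does not increase. A non-increasing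
sequence of positive reals converges. -/

open Finset

theorem Finset.prod_le_one_of_sum_le_card {ι : Type*} {s : Finset ι} {r : ι → ℝ}
    (hr : ∀ i ∈ s, 0 ≤ r i) (hsum : ∑ i ∈ s, r i ≤ #s) : ∏ i ∈ s, r i ≤ 1 :=
  calc ∏ i ∈ s, r i
      ≤ ∏ i ∈ s, Real.exp (r i - 1) :=
        prod_le_prod hr fun i _ => by linarith [Real.add_one_le_exp (r i - 1)]
    _ = Real.exp (∑ i ∈ s, r i - #s) := by simp [← Real.exp_sum, sum_sub_distrib]
    _ ≤ 1 := Real.exp_le_one_iff.mpr (by linarith)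

theorem Finset.prod_le_prod_of_sum_div_le_card {ι : Type*} {s : Finset ι} {a b : ι → ℝ}
    (ha : ∀ i ∈ s, 0 < a i) (hb : ∀ i ∈ s, 0 ≤ b i) (hsum : ∑ i ∈ s, b i / a i ≤ #s) :
    ∏ i ∈ s, b i ≤ ∏ i ∈ s, a i := by
  have hratio : ∏ i ∈ s, b i / a i ≤ 1 :=
    prod_le_one_of_sum_le_card (fun i hi => div_nonneg (hb i hi) (ha i hi).le) hsum
  rwa [prod_div_distrib, div_le_one (prod_pos ha)] at hratio

theorem Finset.prod_le_prod_of_weighted_sum_le {ι : Type*} {s : Finset ι} {a b : ι → ℝ} {c : ℝ}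
    (hc : 0 < c) (ha : ∀ i ∈ s, 0 < a i) (hb : ∀ i ∈ s, 0 ≤ b i)
    (hstep : ∑ i ∈ s, c / a i * b i ≤ ∑ i ∈ s, c / a i * a i) :
    ∏ i ∈ s, b i ≤ ∏ i ∈ s, a i := by
  refine prod_le_prod_of_sum_div_le_card ha hb ?_
  have hlhs : ∑ i ∈ s, c / a i * b i = c * ∑ i ∈ s, b i / a i := by
    rw [mul_sum]; exact sum_congr rfl fun i _ => by ring
  have hrhs : ∑ i ∈ s, c / a i * a i = c * #s := by
    rw [sum_congr rfl fun i hi => div_mul_cancel₀ c (ha i hi).ne', sum_const, nsmul_eq_mul,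
      mul_comm]
  rw [hlhs, hrhs] at hstep
  exact le_of_mul_le_mul_left hstep hc

theorem stmt_6_general (n K : ℕ)
    (u : Fin K → (Fin n → ℝ) → ℝ)
    (hu : ∀ k x, 0 < u k x)
    (μ : ℕ → (Fin n → ℝ))
    (hstep : ∀ t,
      ∑ k, ((∏ ℓ, u ℓ (μ t)) ^ ((K : ℝ)⁻¹) / u k (μ t)) * u k (μ (t + 1)) ≤
      ∑ k, ((∏ ℓ, u ℓ (μ t)) ^ ((K : ℝ)⁻¹) / u k (μ t)) * u k (μ t)) :
    Antitone (fun t => ∏ k, u k (μ t)) ∧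
      ∃ L : ℝ, Filter.Tendsto (fun t => ∏ k, u k (μ t)) Filter.atTop (nhds L) := by
  have hprod_pos : ∀ t, 0 < ∏ k, u k (μ t) := fun t => prod_pos fun k _ => hu k _
  have hanti : Antitone (fun t => ∏ k, u k (μ t)) :=
    antitone_nat_of_succ_le fun t =>
      prod_le_prod_of_weighted_sum_le (Real.rpow_pos_of_pos (hprod_pos t) _)
        (fun k _ => hu k _) (fun k _ => (hu k _).le) (hstep t)
  have hbdd : BddBelow (Set.range fun t => ∏ k, u k (μ t)) :=
    ⟨0, Set.forall_mem_range.mpr fun t => (hprod_pos t).le⟩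
  exact ⟨hanti, _, tendsto_atTop_ciInf hanti hbdd⟩

/-- The iterative power-allocation algorithm produces a non-increasing sequence of
products `∏ k, u k (μ t)`, which (being bounded below by 0) converges. -/
theorem stmt_6 (n K : ℕ) (hK : 0 < K)
    (C : Set (Fin n → ℝ))
    (u : Fin K → (Fin n → ℝ) → ℝ)
    (hu : ∀ k x, 0 < u k x)
    (μ : ℕ → (Fin n → ℝ)) (hμC : ∀ t, μ t ∈ C)
    (hstep : ∀ t,
      ∑ k, ((∏ ℓ, u ℓ (μ t)) ^ ((K : ℝ)⁻¹) / u k (μ t)) * u k (μ (t + 1)) ≤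
      ∑ k, ((∏ ℓ, u ℓ (μ t)) ^ ((K : ℝ)⁻¹) / u k (μ t)) * u k (μ t)) :
    Antitone (fun t => ∏ k, u k (μ t)) ∧
      ∃ L : ℝ, Filter.Tendsto (fun t => ∏ k, u k (μ t)) Filter.atTop (nhds L) :=
  stmt_6_general n K u hu μ hstep
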